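/- arXiv:1811.02433 — 2 statements merged into one kernel-verified Lean document; each statement's English description precedes it below -/
import Mathlib

section
/- For coprime integers p, q ≥ 2 with p ≠ q, and any integers r, s with 1 ≤ r ≤ q−1 and 1 ≤ s ≤ p−1, the conformal weight satisfies h^{p,q}_{r,s} ≥ (1 − (p−q)²)/(4pq), with equality if and only if |rp − sq| = 1. -/
/-!
The numerator `(rp - sq)² - (p - q)²` exceeds the extremal one `1 - (p - q)²` by `(rp - sq)² - 1`,
so it suffices that the integer `rp - sq` is nonzero. If `rp = sq`, then `q ∣ rp`, and since `q`
is coprime to `p` this forces `q ∣ r`, impossible for `0 < r < q`.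
-/

theorem IsCoprime.mul_sub_mul_ne_zero {p q r : ℤ} (hpq : IsCoprime p q) (hr : 0 < r) (hrq : r < q)
    (s : ℤ) : r * p - s * q ≠ 0 := by
  intro h
  have hqr : q ∣ r := hpq.symm.dvd_of_dvd_mul_right ⟨s, by linear_combination h⟩
  exact (Int.le_of_dvd hr hqr).not_gt hrq

section OrderedField

variable {K : Type*} [Field K] [LinearOrder K] [IsStrictOrderedRing K]

theorem one_sub_div_le_intCast_sq_sub_div {k : ℤ} (hk : k ≠ 0) (c : K) {d : K} (hd : 0 ≤ d) :
    (1 - c) / d ≤ ((k : K) ^ 2 - c) / d := by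
  have hk1 : (1 : K) ≤ (k : K) ^ 2 := by
    exact_mod_cast (one_le_sq_iff_one_le_abs k).2 (Int.one_le_abs hk)
  exact div_le_div_of_nonneg_right (sub_le_sub_right hk1 c) hd

theorem intCast_sq_sub_div_eq_one_sub_div_iff (k : ℤ) (c : K) {d : K} (hd : d ≠ 0) :
    ((k : K) ^ 2 - c) / d = (1 - c) / d ↔ |k| = 1 := by
  rw [div_left_inj' hd, sub_left_inj, ← sq_abs, ← pow_left_inj₀ (abs_nonneg k) zero_le_one two_ne_zero,
    one_pow]
  exact_mod_cast Iff.rfl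

end OrderedField

theorem kac_weight_lower_bound_general
    (p q r s : ℤ) (hp : 2 ≤ p) (hq : 2 ≤ q) (hpq : IsCoprime p q)
    (hr1 : 1 ≤ r) (hr2 : r ≤ q - 1) :
    (((r : ℚ) * p - s * q) ^ 2 - ((p : ℚ) - q) ^ 2) / (4 * p * q)
      ≥ (1 - ((p : ℚ) - q) ^ 2) / (4 * p * q)
    ∧ ((((r : ℚ) * p - s * q) ^ 2 - ((p : ℚ) - q) ^ 2) / (4 * p * q)
        = (1 - ((p : ℚ) - q) ^ 2) / (4 * p * q) ↔ |r * p - s * q| = 1) := by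
  have hk : r * p - s * q ≠ 0 := hpq.mul_sub_mul_ne_zero hr1 (by omega) s
  have hd : (0 : ℚ) < 4 * p * q := by
    have hp0 : (0 : ℚ) < p := by exact_mod_cast (by omega : 0 < p)
    have hq0 : (0 : ℚ) < q := by exact_mod_cast (by omega : 0 < q)
    positivity
  have hcast : (r : ℚ) * p - s * q = ((r * p - s * q : ℤ) : ℚ) := by push_cast; ring
  rw [hcast]
  exact ⟨one_sub_div_le_intCast_sq_sub_div hk _ hd.le,
    intCast_sq_sub_div_eq_one_sub_div_iff _ _ hd.ne'⟩

/-- For coprime `p, q ≥ 2` with `p ≠ q` and `1 ≤ r ≤ q−1`, `1 ≤ s ≤ p−1`, the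
conformal weight `h^{p,q}_{r,s} = ((rp − sq)² − (p−q)²)/(4pq)` satisfies
`h^{p,q}_{r,s} ≥ (1 − (p−q)²)/(4pq)`, with equality iff `|rp − sq| = 1`. -/
theorem kac_weight_lower_bound
    (p q r s : ℤ) (hp : 2 ≤ p) (hq : 2 ≤ q) (hpq : IsCoprime p q) (hne : p ≠ q)
    (hr1 : 1 ≤ r) (hr2 : r ≤ q - 1) (hs1 : 1 ≤ s) (hs2 : s ≤ p - 1) :
    (((r : ℚ) * p - s * q) ^ 2 - ((p : ℚ) - q) ^ 2) / (4 * p * q)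
      ≥ (1 - ((p : ℚ) - q) ^ 2) / (4 * p * q)
    ∧ ((((r : ℚ) * p - s * q) ^ 2 - ((p : ℚ) - q) ^ 2) / (4 * p * q)
        = (1 - ((p : ℚ) - q) ^ 2) / (4 * p * q) ↔ |r * p - s * q| = 1) :=
  kac_weight_lower_bound_general p q r s hp hq hpq hr1 hr2
end

section
/- Kac table injectivity: for coprime integers p, q ≥ 2 and integers r, r' ∈ [1, q−1], s, s' ∈ [1, p−1], one has h^{p,q}_{r,s} = h^{p,q}_{r',s'} if and only if (r', s') = (r, s) or (r', s') = (q−r, p−s). -/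
/-!
`h_{r,s}` depends on `(r, s)` only through `(r p - s q)²`, so equal weights mean
`r' p - s' q = ±(r p - s q)`, and the minus sign is the plus sign for `(q - r, p - s)`.
A linear relation `a p = b q` with `p, q` coprime forces `q ∣ a`, hence `a = 0` once `|a| < q`;
the Kac table bounds on `r, r'` provide that.
-/

theorem IsCoprime.eq_zero_of_mul_eq_mul_of_abs_lt {p q a b : ℤ} (hpq : IsCoprime p q)
    (h : a * p = b * q) (ha : |a| < q) : a = 0 ∧ b = 0 := by
  have hq : q ≠ 0 := ((abs_nonneg a).trans_lt ha).ne'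
  have hqa : q ∣ a := hpq.symm.dvd_of_dvd_mul_right ⟨b, by rw [h, mul_comm]⟩
  have ha0 : a = 0 := Int.eq_zero_of_abs_lt_dvd hqa ha
  refine ⟨ha0, ?_⟩
  rw [ha0, zero_mul, eq_comm, mul_eq_zero] at h
  exact h.resolve_right hq

theorem IsCoprime.mul_sub_mul_eq_mul_sub_mul_iff {p q r s r' s' : ℤ} (hpq : IsCoprime p q)
    (hr : |r' - r| < q) : r' * p - s' * q = r * p - s * q ↔ r' = r ∧ s' = s := by
  constructor
  · intro h
    have hlin : (r' - r) * p = (s' - s) * q := by linear_combination h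
    obtain ⟨hr0, hs0⟩ := hpq.eq_zero_of_mul_eq_mul_of_abs_lt hlin hr
    exact ⟨sub_eq_zero.mp hr0, sub_eq_zero.mp hs0⟩
  · rintro ⟨rfl, rfl⟩
    rfl

theorem kac_table_injectivity_general
    (p q r s r' s' : ℤ) (hp : 2 ≤ p) (hpq : IsCoprime p q)
    (hr1 : 1 ≤ r) (hr2 : r ≤ q - 1)
    (hr1' : 1 ≤ r') (hr2' : r' ≤ q - 1) :
    (((r : ℚ) * p - s * q) ^ 2 - ((p : ℚ) - q) ^ 2) / (4 * p * q)
      = (((r' : ℚ) * p - s' * q) ^ 2 - ((p : ℚ) - q) ^ 2) / (4 * p * q)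
    ↔ (r' = r ∧ s' = s) ∨ (r' = q - r ∧ s' = p - s) := by
  have hden : (4 : ℚ) * p * q ≠ 0 := by
    have hp0 : (0 : ℚ) < p := by exact_mod_cast (by omega : (0 : ℤ) < p)
    have hq0 : (0 : ℚ) < q := by exact_mod_cast (by omega : (0 : ℤ) < q)
    positivity
  have hflip : -(r * p - s * q) = (q - r) * p - (p - s) * q := by ring
  have hsame : |r' - r| < q := abs_sub_lt_iff.mpr ⟨by omega, by omega⟩
  have hdual : |r' - (q - r)| < q := abs_sub_lt_iff.mpr ⟨by omega, by omega⟩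
  rw [div_left_inj' hden, sub_left_inj, eq_comm]
  norm_cast
  rw [sq_eq_sq_iff_eq_or_eq_neg, hflip, hpq.mul_sub_mul_eq_mul_sub_mul_iff hsame,
    hpq.mul_sub_mul_eq_mul_sub_mul_iff hdual]

/-- Kac table injectivity: for coprime `p, q ≥ 2` and `r, r' ∈ [1, q−1]`,
`s, s' ∈ [1, p−1]`, one has `h^{p,q}_{r,s} = h^{p,q}_{r',s'}` iff
`(r', s') = (r, s)` or `(r', s') = (q−r, p−s)`, where
`h^{p,q}_{r,s} = ((rp − sq)² − (p−q)²)/(4pq)`. -/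
theorem kac_table_injectivity
    (p q r s r' s' : ℤ) (hp : 2 ≤ p) (hq : 2 ≤ q) (hpq : IsCoprime p q)
    (hr1 : 1 ≤ r) (hr2 : r ≤ q - 1) (hs1 : 1 ≤ s) (hs2 : s ≤ p - 1)
    (hr1' : 1 ≤ r') (hr2' : r' ≤ q - 1) (hs1' : 1 ≤ s') (hs2' : s' ≤ p - 1) :
    (((r : ℚ) * p - s * q) ^ 2 - ((p : ℚ) - q) ^ 2) / (4 * p * q)
      = (((r' : ℚ) * p - s' * q) ^ 2 - ((p : ℚ) - q) ^ 2) / (4 * p * q)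
    ↔ (r' = r ∧ s' = s) ∨ (r' = q - r ∧ s' = p - s) :=
  kac_table_injectivity_general p q r s r' s' hp hpq hr1 hr2 hr1' hr2'
end
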